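/- Let S be an association scheme with a relation R_a such that the characteristic p of F divides k_a. Then the algebra E_a^* T E_a^* (corner algebra of the Terwilliger F-algebra) is not semisimple; specifically, the F-span of E_a^* J E_a^* is a nonzero two-sided nilpotent ideal of E_a^* T E_a^*. -/
import Mathlib


open scoped Classical

/-- An association scheme on a finite set `X` with `d + 1` relations. -/
structure AssocScheme (X : Type) [Fintype X] (d : ℕ) where
  /-- the relations `R_0, …, R_d` -/
  R : Fin (d + 1) → X → X → Prop
  rel_nonempty : ∀ i, ∃ x y, R i x y
  partition : ∀ x y, ∃! i, R i x y
  diag : ∀ x y, R 0 x y ↔ x = y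
  /-- the transpose involution `a ↦ a'` -/
  inv : Fin (d + 1) → Fin (d + 1)
  inv_spec : ∀ i x y, R (inv i) x y ↔ R i y x
  /-- the intersection numbers `p_{ij}^k` -/
  p : Fin (d + 1) → Fin (d + 1) → Fin (d + 1) → ℕ
  p_spec : ∀ i j k x y, R k x y → {z | R i x z ∧ R j z y}.ncard = p i j k

namespace AssocScheme

variable {X : Type} [Fintype X] [DecidableEq X] {d : ℕ}

/-- the valency `k_a = p_{a a'}^0` -/
def k (S : AssocScheme X d) (a : Fin (d + 1)) : ℕ := S.p a (S.inv a) 0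

/-- `|R_a R_b|`, the number of relations in the complex product -/
def nProd (S : AssocScheme X d) (a b : Fin (d + 1)) : ℕ :=
  (Finset.univ.filter fun c => 0 < S.p a b c).card

/-- the adjacency matrix of `R_b` over `F` -/
noncomputable def adj (S : AssocScheme X d) (F : Type) [Field F] (b : Fin (d + 1)) :
    Matrix X X F :=
  Matrix.of fun u v => if S.R b u v then 1 else 0

/-- the dual idempotent `E_a^*(x)` -/
noncomputable def dualIdem (S : AssocScheme X d) (F : Type) [Field F] (x : X)
    (a : Fin (d + 1)) : Matrix X X F :=
  Matrix.diagonal fun u => if S.R a x u then 1 else 0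

/-- the Terwilliger `F`-algebra of `S` with respect to the vertex `x` -/
noncomputable def Terw (S : AssocScheme X d) (F : Type) [Field F] (x : X) :
    Subalgebra F (Matrix X X F) :=
  Algebra.adjoin F (Set.range (S.adj F) ∪ Set.range (S.dualIdem F x))

/-- the all-ones matrix -/
def allOnes (X : Type) (F : Type) [Field F] : Matrix X X F := Matrix.of fun _ _ => 1

end AssocScheme

open AssocScheme

section Aux

open AssocScheme Matrix

variable {X : Type} [Fintype X] [DecidableEq X] {d : ℕ} (S : AssocScheme X d)
  (F : Type) [Field F] (x : X)

private lemma ncard_filter (P : X → Prop) :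
    {z | P z}.ncard = (Finset.univ.filter P).card := by
  rw [Set.ncard_eq_toFinset_card']
  congr 1
  ext z
  simp

/-- the count `#{z : R c x z ∧ R b' z u}` equals `p c b' e` where `R e x u`. -/
private lemma count_p (c b' e : Fin (d + 1)) (u : X) (he : S.R e x u) :
    (Finset.univ.filter fun w => S.R c x w ∧ S.R b' w u).card = S.p c b' e := by
  have h := S.p_spec c b' e x u he
  rw [Set.ncard_eq_toFinset_card', Set.toFinset_setOf] at h
  exact h

private lemma dual_mul_dual (cc c : Fin (d + 1)) :
    S.dualIdem F x cc * S.dualIdem F x c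
      = (if cc = c then (1 : F) else 0) • S.dualIdem F x c := by
  unfold dualIdem
  rw [Matrix.diagonal_mul_diagonal]
  rcases eq_or_ne cc c with rfl | h
  · rw [if_pos rfl, one_smul]
    ext u v
    simp only [Matrix.diagonal_apply]
    by_cases hc : S.R cc x u <;> simp [hc]
  · rw [if_neg h, zero_smul]
    ext u v
    simp only [Matrix.diagonal_apply, Matrix.zero_apply]
    rcases eq_or_ne u v with rfl | huv
    · simp only [if_pos rfl]
      by_cases hc : S.R c x u
      · have hncc : ¬ S.R cc x u := by
          intro hcc
          obtain ⟨i, hi, hu⟩ := S.partition x u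
          exact h ((hu cc hcc).trans (hu c hc).symm)
        simp [hncc, hc]
      · simp [hc]
    · simp [huv]

private lemma dual_idem (c : Fin (d + 1)) :
    S.dualIdem F x c * S.dualIdem F x c = S.dualIdem F x c := by
  rw [dual_mul_dual]; simp

/-- entries of `D c * J * D a` -/
private lemma DJD_apply (c a : Fin (d + 1)) (u v : X) :
    (S.dualIdem F x c * allOnes X F * S.dualIdem F x a) u v
      = (if S.R c x u then (1:F) else 0) * (if S.R a x v then 1 else 0) := by
  unfold dualIdem allOnes
  rw [Matrix.mul_diagonal, Matrix.diagonal_mul]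
  simp [mul_comm]

private lemma adj_mul_DJD (b c a : Fin (d + 1)) :
    S.adj F b * (S.dualIdem F x c * allOnes X F * S.dualIdem F x a)
      = ∑ e : Fin (d + 1), ((S.p c (S.inv b) e : F)) •
          (S.dualIdem F x e * allOnes X F * S.dualIdem F x a) := by
  ext u v
  rw [Matrix.mul_apply]
  simp only [Matrix.sum_apply, Matrix.smul_apply, DJD_apply, smul_eq_mul]
  obtain ⟨i, hi, hu⟩ := S.partition x u
  have lhs_eq : ∀ w, S.adj F b u w *
      ((if S.R c x w then (1:F) else 0) * (if S.R a x v then 1 else 0))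
      = (if S.R c x w ∧ S.R (S.inv b) w u then (1:F) else 0) * (if S.R a x v then 1 else 0) := by
    intro w
    have : S.adj F b u w = if S.R (S.inv b) w u then (1:F) else 0 := by
      simp [adj, S.inv_spec]
    rw [this, ← mul_assoc]
    congr 1
    rw [ite_and, mul_comm]
    by_cases h1 : S.R c x w <;> by_cases h2 : S.R (S.inv b) w u <;> simp [h1, h2]
  rw [Finset.sum_congr rfl fun w _ => lhs_eq w, ← Finset.sum_mul, Finset.sum_boole,
    count_p S x c (S.inv b) i u hi]
  have rhs_eq : ∀ e, (S.p c (S.inv b) e : F) *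
      ((if S.R e x u then (1:F) else 0) * (if S.R a x v then 1 else 0))
      = ((if e = i then (S.p c (S.inv b) e : F) else 0) * (if S.R a x v then 1 else 0)) := by
    intro e
    rcases eq_or_ne e i with rfl | h
    · simp [hi]
    · have : ¬ S.R e x u := fun he => h (hu e he)
      simp [this, h]
  rw [Finset.sum_congr rfl fun e _ => rhs_eq e, ← Finset.sum_mul, Finset.sum_ite_eq']
  simp

private lemma DJD_mul_adj (b c a : Fin (d + 1)) :
    (S.dualIdem F x a * allOnes X F * S.dualIdem F x c) * S.adj F b
      = ∑ e : Fin (d + 1), ((S.p c b e : F)) •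
          (S.dualIdem F x a * allOnes X F * S.dualIdem F x e) := by
  ext u v
  rw [Matrix.mul_apply]
  simp only [Matrix.sum_apply, Matrix.smul_apply, DJD_apply, smul_eq_mul]
  obtain ⟨i, hi, hu⟩ := S.partition x v
  have lhs_eq : ∀ w,
      ((if S.R a x u then (1:F) else 0) * (if S.R c x w then 1 else 0)) * S.adj F b w v
      = (if S.R a x u then (1:F) else 0) * (if S.R c x w ∧ S.R b w v then 1 else 0) := by
    intro w
    have : S.adj F b w v = if S.R b w v then (1:F) else 0 := by simp [adj]
    rw [this, mul_assoc]
    congr 1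
    rw [ite_and]
    by_cases h1 : S.R c x w <;> by_cases h2 : S.R b w v <;> simp [h1, h2]
  rw [Finset.sum_congr rfl fun w _ => lhs_eq w, ← Finset.mul_sum, Finset.sum_boole,
    count_p S x c b i v hi]
  have rhs_eq : ∀ e, (S.p c b e : F) *
      ((if S.R a x u then (1:F) else 0) * (if S.R e x v then 1 else 0))
      = ((if S.R a x u then (1:F) else 0) * (if e = i then (S.p c b e : F) else 0)) := by
    intro e
    rcases eq_or_ne e i with rfl | h
    · simp only [if_pos rfl, hi, if_true, mul_one]
      ring
    · have : ¬ S.R e x v := fun he => h (hu e he)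
      simp [this, h]
  rw [Finset.sum_congr rfl fun e _ => rhs_eq e, ← Finset.mul_sum, Finset.sum_ite_eq']
  simp

private lemma dual_mul_DJD (cc c a : Fin (d + 1)) :
    S.dualIdem F x cc * (S.dualIdem F x c * allOnes X F * S.dualIdem F x a)
      = (if cc = c then (1:F) else 0) •
          (S.dualIdem F x c * allOnes X F * S.dualIdem F x a) := by
  calc S.dualIdem F x cc * (S.dualIdem F x c * allOnes X F * S.dualIdem F x a)
      = (S.dualIdem F x cc * S.dualIdem F x c) * allOnes X F * S.dualIdem F x a := by
        noncomm_ring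
    _ = _ := by rw [dual_mul_dual]; simp [smul_mul_assoc]

private lemma DJD_mul_dual (cc c a : Fin (d + 1)) :
    (S.dualIdem F x a * allOnes X F * S.dualIdem F x c) * S.dualIdem F x cc
      = (if c = cc then (1:F) else 0) •
          (S.dualIdem F x a * allOnes X F * S.dualIdem F x c) := by
  rw [mul_assoc, dual_mul_dual]
  rcases eq_or_ne c cc with rfl | h
  · simp [mul_assoc]
  · simp [h]

/-- the left module `W = span { D e J D a }` is stable under left mult by `T`. -/
private lemma terw_mul_mem (a : Fin (d + 1)) {M : Matrix X X F} (hM : M ∈ S.Terw F x) :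
    ∀ c : Fin (d + 1), M * (S.dualIdem F x c * allOnes X F * S.dualIdem F x a) ∈
      Submodule.span F (Set.range fun e =>
        S.dualIdem F x e * allOnes X F * S.dualIdem F x a) := by
  set W := Submodule.span F (Set.range fun e =>
    S.dualIdem F x e * allOnes X F * S.dualIdem F x a) with hW
  have hgen : ∀ e, S.dualIdem F x e * allOnes X F * S.dualIdem F x a ∈ W :=
    fun e => Submodule.subset_span ⟨e, rfl⟩
  have key : ∀ {M : Matrix X X F}, (∀ c, M *
      (S.dualIdem F x c * allOnes X F * S.dualIdem F x a) ∈ W) →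
      ∀ w ∈ W, M * w ∈ W := by
    intro M hPM w hw
    induction hw using Submodule.span_induction with
    | mem w hw => obtain ⟨e, rfl⟩ := hw; exact hPM e
    | zero => simp
    | add u v _ _ hu hv => rw [mul_add]; exact W.add_mem hu hv
    | smul r u _ hu => rw [mul_smul_comm]; exact W.smul_mem r hu
  induction hM using Algebra.adjoin_induction with
  | mem M hMs =>
    intro c
    rcases hMs with ⟨b, rfl⟩ | ⟨cc, rfl⟩
    · rw [adj_mul_DJD]
      exact W.sum_mem fun e _ => W.smul_mem _ (hgen e)
    · rw [dual_mul_DJD]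
      exact W.smul_mem _ (hgen c)
  | algebraMap r =>
    intro c
    rw [Algebra.algebraMap_eq_smul_one, smul_mul_assoc, one_mul]
    exact W.smul_mem r (hgen c)
  | add M N _ _ hM hN =>
    intro c
    rw [add_mul]
    exact W.add_mem (hM c) (hN c)
  | mul M N _ _ hM hN =>
    intro c
    rw [mul_assoc]
    exact key hM _ (hN c)

private lemma mul_terw_mem (a : Fin (d + 1)) {M : Matrix X X F} (hM : M ∈ S.Terw F x) :
    ∀ c : Fin (d + 1), (S.dualIdem F x a * allOnes X F * S.dualIdem F x c) * M ∈
      Submodule.span F (Set.range fun e =>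
        S.dualIdem F x a * allOnes X F * S.dualIdem F x e) := by
  set W := Submodule.span F (Set.range fun e =>
    S.dualIdem F x a * allOnes X F * S.dualIdem F x e) with hW
  have hgen : ∀ e, S.dualIdem F x a * allOnes X F * S.dualIdem F x e ∈ W :=
    fun e => Submodule.subset_span ⟨e, rfl⟩
  have key : ∀ {M : Matrix X X F}, (∀ c,
      (S.dualIdem F x a * allOnes X F * S.dualIdem F x c) * M ∈ W) →
      ∀ w ∈ W, w * M ∈ W := by
    intro M hPM w hw
    induction hw using Submodule.span_induction with
    | mem w hw => obtain ⟨e, rfl⟩ := hw; exact hPM e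
    | zero => simp
    | add u v _ _ hu hv => rw [add_mul]; exact W.add_mem hu hv
    | smul r u _ hu => rw [smul_mul_assoc]; exact W.smul_mem r hu
  induction hM using Algebra.adjoin_induction with
  | mem M hMs =>
    intro c
    rcases hMs with ⟨b, rfl⟩ | ⟨cc, rfl⟩
    · rw [DJD_mul_adj]
      exact W.sum_mem fun e _ => W.smul_mem _ (hgen e)
    · rw [DJD_mul_dual]
      exact W.smul_mem _ (hgen c)
  | algebraMap r =>
    intro c
    rw [Algebra.algebraMap_eq_smul_one, mul_smul_comm, mul_one]
    exact W.smul_mem r (hgen c)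
  | add M N _ _ hM hN =>
    intro c
    rw [mul_add]
    exact W.add_mem (hM c) (hN c)
  | mul M N _ _ hM hN =>
    intro c
    rw [← mul_assoc]
    exact key hN _ (hM c)

end Aux

/-- if `char F = p > 0` divides `k_a`, then the span of `E_a^* J E_a^*` is a
nonzero two-sided nilpotent ideal of the corner algebra `E_a^* T E_a^*`; in particular that
corner algebra is not semisimple. -/
theorem stmt_12 {X : Type} [Fintype X] [DecidableEq X] {d : ℕ} (S : AssocScheme X d)
    (F : Type) [Field F] (x : X) (a : Fin (d + 1))
    (hp : 0 < ringChar F) (hdvd : (ringChar F : ℕ) ∣ S.k a) :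
    S.dualIdem F x a * allOnes X F * S.dualIdem F x a ≠ 0 ∧
    S.dualIdem F x a * allOnes X F * S.dualIdem F x a ∈ S.Terw F x ∧
    (∀ M ∈ S.Terw F x,
      (S.dualIdem F x a * M * S.dualIdem F x a) *
          (S.dualIdem F x a * allOnes X F * S.dualIdem F x a) ∈
        Submodule.span F {S.dualIdem F x a * allOnes X F * S.dualIdem F x a} ∧
      (S.dualIdem F x a * allOnes X F * S.dualIdem F x a) *
          (S.dualIdem F x a * M * S.dualIdem F x a) ∈
        Submodule.span F {S.dualIdem F x a * allOnes X F * S.dualIdem F x a}) ∧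
    (∀ P ∈ Submodule.span F {S.dualIdem F x a * allOnes X F * S.dualIdem F x a},
      ∀ Q ∈ Submodule.span F {S.dualIdem F x a * allOnes X F * S.dualIdem F x a},
        P * Q = 0) := by
    classical
  have hEE : S.dualIdem F x a * S.dualIdem F x a = S.dualIdem F x a := dual_idem S F x a
  -- positivity of the valency
  have hkpos : 0 < S.k a := by
    obtain ⟨y, z, hyz⟩ := S.rel_nonempty a
    have h := S.p_spec a (S.inv a) 0 y y ((S.diag y y).mpr rfl)
    have hz : z ∈ {w | S.R a y w ∧ S.R (S.inv a) w y} :=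
      ⟨hyz, (S.inv_spec a z y).mpr hyz⟩
    have hpos : 0 < {w | S.R a y w ∧ S.R (S.inv a) w y}.ncard :=
      (Set.ncard_pos (Set.toFinite _)).mpr ⟨z, hz⟩
    rw [h] at hpos
    exact hpos
  -- a vertex in relation `a` with `x`
  have hcx := S.p_spec a (S.inv a) 0 x x ((S.diag x x).mpr rfl)
  obtain ⟨u, hu, -⟩ : {w | S.R a x w ∧ S.R (S.inv a) w x}.Nonempty := by
    apply Set.nonempty_of_ncard_ne_zero
    rw [hcx]
    exact hkpos.ne'
  -- the valency vanishes in `F`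
  have hkF : ((S.k a : ℕ) : F) = 0 := by
    have : CharP F (ringChar F) := ringChar.charP F
    exact (CharP.cast_eq_zero_iff F (ringChar F) (S.k a)).mpr hdvd
  -- the crucial vanishing sum
  have hsum : (∑ w : X, if S.R a x w then (1:F) else 0) = 0 := by
    rw [Finset.sum_boole]
    have hfe : (Finset.univ.filter fun w => S.R a x w ∧ S.R (S.inv a) w x)
        = Finset.univ.filter fun w => S.R a x w := by
      ext w
      simp [S.inv_spec]
    have h := S.p_spec a (S.inv a) 0 x x ((S.diag x x).mpr rfl)
    rw [Set.ncard_eq_toFinset_card', Set.toFinset_setOf, hfe] at h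
    rw [h]
    exact hkF
  -- J is the sum of the adjacency matrices
  have hJsum : allOnes X F = ∑ b : Fin (d + 1), S.adj F b := by
    ext v w
    obtain ⟨i, hi, hun⟩ := S.partition v w
    simp only [allOnes, Matrix.of_apply, Matrix.sum_apply]
    have heach : ∀ b, S.adj F b v w = if b = i then (1:F) else 0 := by
      intro b
      rcases eq_or_ne b i with rfl | h
      · simp [adj, hi]
      · have : ¬ S.R b v w := fun hb => h (hun b hb)
        simp [adj, this, h]
    rw [Finset.sum_congr rfl fun b _ => heach b, Finset.sum_ite_eq']
    simp
  have hEmem : S.dualIdem F x a ∈ S.Terw F x :=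
    Algebra.subset_adjoin (Or.inr ⟨a, rfl⟩)
  have hJmem : allOnes X F ∈ S.Terw F x := by
    rw [hJsum]
    exact Subalgebra.sum_mem _ fun b _ => Algebra.subset_adjoin (Or.inl ⟨b, rfl⟩)
  -- `Z * Z = 0`
  have hZZ : (S.dualIdem F x a * allOnes X F * S.dualIdem F x a) *
      (S.dualIdem F x a * allOnes X F * S.dualIdem F x a) = 0 := by
    ext v w
    rw [Matrix.mul_apply]
    have heach : ∀ z, (S.dualIdem F x a * allOnes X F * S.dualIdem F x a) v z *
        (S.dualIdem F x a * allOnes X F * S.dualIdem F x a) z w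
        = ((if S.R a x v then (1:F) else 0) * (if S.R a x w then 1 else 0)) *
            (if S.R a x z then 1 else 0) := by
      intro z
      rw [DJD_apply, DJD_apply]
      by_cases h : S.R a x z <;> simp [h] <;> ring
    rw [Finset.sum_congr rfl fun z _ => heach z, ← Finset.mul_sum, hsum]
    simp
  -- the "absorption" facts
  have habsL : ∀ w ∈ Submodule.span F (Set.range fun e =>
      S.dualIdem F x e * allOnes X F * S.dualIdem F x a),
      S.dualIdem F x a * w ∈
        Submodule.span F {S.dualIdem F x a * allOnes X F * S.dualIdem F x a} := by
    intro w hw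
    induction hw using Submodule.span_induction with
    | mem w hw =>
      obtain ⟨e, rfl⟩ := hw
      rw [dual_mul_DJD]
      rcases eq_or_ne a e with rfl | h
      · simpa using Submodule.mem_span_singleton_self _
      · rw [if_neg h, zero_smul]
        exact zero_mem _
    | zero => simp
    | add p q _ _ hp hq => rw [mul_add]; exact add_mem hp hq
    | smul r p _ hp => rw [mul_smul_comm]; exact Submodule.smul_mem _ r hp
  have habsR : ∀ w ∈ Submodule.span F (Set.range fun e =>
      S.dualIdem F x a * allOnes X F * S.dualIdem F x e),
      w * S.dualIdem F x a ∈
        Submodule.span F {S.dualIdem F x a * allOnes X F * S.dualIdem F x a} := by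
    intro w hw
    induction hw using Submodule.span_induction with
    | mem w hw =>
      obtain ⟨e, rfl⟩ := hw
      rw [DJD_mul_dual]
      rcases eq_or_ne e a with rfl | h
      · simpa using Submodule.mem_span_singleton_self _
      · rw [if_neg h, zero_smul]
        exact zero_mem _
    | zero => simp
    | add p q _ _ hp hq => rw [add_mul]; exact add_mem hp hq
    | smul r p _ hp => rw [smul_mul_assoc]; exact Submodule.smul_mem _ r hp
  refine ⟨?_, ?_, ?_, ?_⟩
  · -- nonzero
    intro h
    have h0 := DJD_apply S F x a a u u
    rw [h] at h0
    simp [hu] at h0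
  · exact mul_mem (mul_mem hEmem hJmem) hEmem
  · intro M hM
    have hEME : S.dualIdem F x a * M * S.dualIdem F x a ∈ S.Terw F x :=
      mul_mem (mul_mem hEmem hM) hEmem
    constructor
    · have h1 := terw_mul_mem S F x a hEME a
      have h2 : S.dualIdem F x a * (S.dualIdem F x a * M * S.dualIdem F x a) =
          S.dualIdem F x a * M * S.dualIdem F x a := by
        rw [← mul_assoc, ← mul_assoc, hEE]
      have h3 : (S.dualIdem F x a * M * S.dualIdem F x a) *
          (S.dualIdem F x a * allOnes X F * S.dualIdem F x a) =
          S.dualIdem F x a * ((S.dualIdem F x a * M * S.dualIdem F x a) *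
            (S.dualIdem F x a * allOnes X F * S.dualIdem F x a)) := by
        conv_rhs => rw [← mul_assoc, h2]
      rw [h3]
      exact habsL _ h1
    · have h1 := mul_terw_mem S F x a hEME a
      have h2 : (S.dualIdem F x a * M * S.dualIdem F x a) * S.dualIdem F x a =
          S.dualIdem F x a * M * S.dualIdem F x a := by
        rw [mul_assoc, hEE]
      have h3 : (S.dualIdem F x a * allOnes X F * S.dualIdem F x a) *
          (S.dualIdem F x a * M * S.dualIdem F x a) =
          ((S.dualIdem F x a * allOnes X F * S.dualIdem F x a) *
            (S.dualIdem F x a * M * S.dualIdem F x a)) * S.dualIdem F x a := by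
        conv_rhs => rw [mul_assoc, h2]
      rw [h3]
      exact habsR _ h1
  · intro P hP Q hQ
    rw [Submodule.mem_span_singleton] at hP hQ
    obtain ⟨p, rfl⟩ := hP
    obtain ⟨q, rfl⟩ := hQ
    rw [smul_mul_assoc, mul_smul_comm, hZZ]
    simp
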